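/- arXiv:1211.3197 — 2 statements merged into one kernel-verified Lean document; each statement's English description precedes it below -/
import Mathlib

section
/- Let A be an n×n Cartan matrix of indefinite type whose upper-left (n−1)×(n−1) principal submatrix A' is indecomposable and symmetrizable, and suppose I(A') = ℚ[ψ'] for a nonzero ψ' = Σ_{i,j=1}^{n−1} λ_{ij} ω_i ω_j ∈ I²(A') with λ_{ij} = λ_{ji}. Let l = 2m be even and let f ∈ I(A) be homogeneous of degree l, written f = Σ_{i=0}^l f_i·ω_n^{l−i}. Then there exists a constant k ∈ ℚ such that f_l = k·ψ'^m and f_{l−1} = k·m·ψ'^{m−1}·ω_n^*, where ω_n^* = Σ_{j=1}^{n−1} λ_{jj} a_{nj} ω_j. -/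
open MvPolynomial Matrix

section Defs

variable {ι : Type*} [Fintype ι] [DecidableEq ι]

/-- An integer matrix is a (generalized) Cartan matrix. -/
def IsCartanMatrix (A : Matrix ι ι ℤ) : Prop :=
  (∀ i, A i i = 2) ∧ (∀ i j, i ≠ j → A i j ≤ 0) ∧ ∀ i j, A i j = 0 → A j i = 0

/-- The simple root `α_i = ∑ j, a_{ji} ω_j`, viewed inside `ℚ[ω_1, …, ω_n]`. -/
noncomputable def simpleRoot (A : Matrix ι ι ℤ) (i : ι) : MvPolynomial ι ℚ :=
  ∑ j, (A j i : ℚ) • X j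

/-- The Weyl reflection `σ_i`, the ℚ-algebra endomorphism with `σ_i(ω_j) = ω_j - δ_{ij} α_i`. -/
noncomputable def weylRefl (A : Matrix ι ι ℤ) (i : ι) :
    MvPolynomial ι ℚ →ₐ[ℚ] MvPolynomial ι ℚ :=
  aeval fun j => X j - if j = i then simpleRoot A i else 0

/-- A polynomial is `W(A)`-invariant iff it is fixed by every simple reflection. -/
def WeylInvariant (A : Matrix ι ι ℤ) (f : MvPolynomial ι ℚ) : Prop :=
  ∀ i, weylRefl A i f = f

/-- Indecomposability of a Cartan matrix. -/
def Indecomposable (A : Matrix ι ι ℤ) : Prop :=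
  ¬∃ I J : Set ι, I.Nonempty ∧ J.Nonempty ∧ Disjoint I J ∧ I ∪ J = Set.univ ∧
    ∀ i ∈ I, ∀ j ∈ J, A i j = 0

/-- `A` is symmetrizable: `A = D B` with `D` invertible diagonal and `B` symmetric. -/
def Symmetrizable (A : Matrix ι ι ℤ) : Prop :=
  ∃ (d : ι → ℚ) (B : Matrix ι ι ℚ), (∀ i, d i ≠ 0) ∧ Bᵀ = B ∧
    A.map (Int.cast : ℤ → ℚ) = Matrix.diagonal d * B

/-- `A` is of finite type: `xᵀ A x > 0` for all nonzero real `x`. -/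
def FiniteType (A : Matrix ι ι ℤ) : Prop :=
  ∀ x : ι → ℝ, x ≠ 0 → 0 < x ⬝ᵥ ((A.map (Int.cast : ℤ → ℝ)) *ᵥ x)

/-- `A` is of affine type: positive semidefinite of rank `n - 1`. -/
def AffineType (A : Matrix ι ι ℤ) : Prop :=
  (∀ x : ι → ℝ, 0 ≤ x ⬝ᵥ ((A.map (Int.cast : ℤ → ℝ)) *ᵥ x)) ∧
    (A.map (Int.cast : ℤ → ℝ)).rank = Fintype.card ι - 1

/-- `A` is of indefinite type: neither finite nor affine type. -/
def IndefiniteType (A : Matrix ι ι ℤ) : Prop := ¬FiniteType A ∧ ¬AffineType A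

end Defs

/-- The degree-1 element `ω'_n = ∑_{j ≤ n-1} a_{jn} ω_j ∈ ℚ[ω_1, …, ω_{n-1}]`. -/
noncomputable def omegaPrime {n : ℕ} (A : Matrix (Fin (n + 1)) (Fin (n + 1)) ℤ) :
    MvPolynomial (Fin n) ℚ :=
  ∑ j : Fin n, (A j.castSucc (Fin.last n) : ℚ) • X j

/-!
Write `f` as a polynomial in `ω_n` with coefficients in `ℚ[ω_1, …, ω_{n-1}]`. For `i < n` the
reflection `σ_i` fixes `ω_n` and sends `ω_i` to `ω_i - α'_i - a_{ni} ω_n`, so comparing the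
coefficients of `ω_n^0` and `ω_n^1` in `σ_i f = f` shows that `f_l` is `W(A')`-invariant and that
`σ'_i f_{l-1} - a_{ni} σ'_i (∂_i f_l) = f_{l-1}`. Being invariant of degree `2m`, `f_l = k ψ'^m`.
Invariance of `ψ'` under `σ'_i` forces `∂_i ψ' = λ_{ii} α'_i`, and then the relation says that
`f_{l-1} - k m ψ'^{m-1} ω_n^*` is `W(A')`-invariant; a polynomial in `ψ'` of odd degree vanishes.
-/

section WeylReflection
variable {ι : Type*} [Fintype ι] [DecidableEq ι] (A : Matrix ι ι ℤ) (i : ι)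

theorem weylRefl_X (j : ι) : weylRefl A i (X j) = X j - if j = i then simpleRoot A i else 0 :=
  aeval_X _ _

theorem weylRefl_linear (c : ι → ℚ) :
    weylRefl A i (∑ j, c j • X j) = ∑ j, c j • X j - c i • simpleRoot A i := by
  simp only [map_sum, map_smul, weylRefl_X, smul_sub, smul_ite, smul_zero,
    Finset.sum_sub_distrib, Finset.sum_ite_eq', Finset.mem_univ, if_true]

variable {A i}

theorem weylRefl_simpleRoot_self (hii : A i i = 2) :
    weylRefl A i (simpleRoot A i) = -simpleRoot A i := by
  rw [simpleRoot, weylRefl_linear, ← simpleRoot, hii, Int.cast_ofNat, two_smul]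
  abel

theorem simpleRoot_ne_zero (hii : A i i = 2) : simpleRoot A i ≠ 0 := by
  intro h
  have := congrArg (pderiv i) h
  simp [simpleRoot, Pi.single_apply, hii] at this

end WeylReflection

section QuadraticPoly
variable {ι : Type*} [Fintype ι]

theorem isHomogeneous_sum_smul_X (c : ι → ℚ) :
    (∑ j, c j • X j : MvPolynomial ι ℚ).IsHomogeneous 1 :=
  IsHomogeneous.sum _ _ _ fun j _ => by simpa only [smul_eq_C_mul] using isHomogeneous_C_mul_X _ j

noncomputable def quadraticPoly (lam : ι → ι → ℚ) : MvPolynomial ι ℚ :=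
  ∑ a, ∑ b, lam a b • (X a * X b)

theorem isHomogeneous_quadraticPoly (lam : ι → ι → ℚ) : (quadraticPoly lam).IsHomogeneous 2 :=
  IsHomogeneous.sum _ _ _ fun a _ => IsHomogeneous.sum _ _ _ fun b _ => by
    simpa only [smul_eq_C_mul] using ((isHomogeneous_X ℚ a).mul (isHomogeneous_X ℚ b)).C_mul _

variable [DecidableEq ι]

theorem weylRefl_quadraticPoly (A : Matrix ι ι ℤ) (i : ι) (lam : ι → ι → ℚ) :
    weylRefl A i (quadraticPoly lam) = quadraticPoly lam
      - simpleRoot A i * pderiv i (quadraticPoly lam) + lam i i • simpleRoot A i ^ 2 := by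
  have term : ∀ a b, weylRefl A i (lam a b • (X a * X b)) = lam a b • (X a * X b)
      - simpleRoot A i * pderiv i (lam a b • (X a * X b))
      + (if a = i then if b = i then lam a b • simpleRoot A i ^ 2 else 0 else 0) := by
    intro a b
    simp only [map_smul, Derivation.map_smul, map_mul, weylRefl_X, pderiv_mul, pderiv_X,
      Pi.single_apply]
    split_ifs <;> simp only [smul_eq_C_mul] <;> ring
  simp only [quadraticPoly, map_sum, term, Finset.sum_add_distrib, Finset.sum_sub_distrib,
    Finset.mul_sum]
  simp

theorem pderiv_quadraticPoly_of_weylRefl_eq {A : Matrix ι ι ℤ} {i : ι} (hii : A i i = 2)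
    {lam : ι → ι → ℚ} (h : weylRefl A i (quadraticPoly lam) = quadraticPoly lam) :
    pderiv i (quadraticPoly lam) = lam i i • simpleRoot A i := by
  rw [weylRefl_quadraticPoly] at h
  have : simpleRoot A i * (pderiv i (quadraticPoly lam) - lam i i • simpleRoot A i) = 0 := by
    simp only [smul_eq_C_mul] at h ⊢
    linear_combination -h
  exact sub_eq_zero.mp ((mul_eq_zero.mp this).resolve_left (simpleRoot_ne_zero hii))

end QuadraticPoly

namespace MvPolynomial
variable {σ R : Type*} [CommSemiring R] {ψ h : MvPolynomial σ R} {e : ℕ}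

theorem homogeneousComponent_aeval (hψ : ψ.IsHomogeneous e) (p : Polynomial R) (d : ℕ) :
    homogeneousComponent d (Polynomial.aeval ψ p)
      = ∑ i ∈ Finset.range (p.natDegree + 1), if d = e * i then p.coeff i • ψ ^ i else 0 := by
  rw [Polynomial.aeval_eq_sum_range, map_sum]
  refine Finset.sum_congr rfl fun i _ => ?_
  rw [map_smul, homogeneousComponent_of_mem (hψ.pow i), smul_ite, smul_zero]

theorem IsHomogeneous.eq_coeff_smul_pow_of_eq_aeval {m : ℕ} (hh : h.IsHomogeneous (e * m))
    (hψ : ψ.IsHomogeneous e) (he : e ≠ 0) {p : Polynomial R} (hp : h = Polynomial.aeval ψ p) :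
    h = p.coeff m • ψ ^ m := by
  rw [← homogeneousComponent_eq_self hh, hp, homogeneousComponent_aeval hψ]
  simp only [Nat.mul_right_inj he, Finset.sum_ite_eq, Finset.mem_range]
  split_ifs with hm
  · rfl
  · rw [Polynomial.coeff_eq_zero_of_natDegree_lt (by omega), zero_smul]

theorem IsHomogeneous.eq_zero_of_eq_aeval {d : ℕ} (hh : h.IsHomogeneous d)
    (hψ : ψ.IsHomogeneous e) (hd : ¬e ∣ d) {p : Polynomial R} (hp : h = Polynomial.aeval ψ p) :
    h = 0 := by
  rw [← homogeneousComponent_eq_self hh, hp, homogeneousComponent_aeval hψ]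
  exact Finset.sum_eq_zero fun i _ => if_neg fun hdi => hd ⟨i, hdi⟩

end MvPolynomial

section LastVariable

noncomputable def lastVarEquiv (R : Type*) [CommSemiring R] (n : ℕ) :
    MvPolynomial (Fin (n + 1)) R ≃ₐ[R] Polynomial (MvPolynomial (Fin n) R) :=
  (renameEquiv R finSuccEquivLast).trans (optionEquivLeft R (Fin n))

variable {R : Type*} [CommSemiring R] {n : ℕ}

theorem lastVarEquiv_X_castSucc (j : Fin n) :
    lastVarEquiv R n (X j.castSucc) = Polynomial.C (X j) := by
  simp [lastVarEquiv, optionEquivLeft_X_some]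

theorem lastVarEquiv_X_last : lastVarEquiv R n (X (Fin.last n)) = Polynomial.X := by
  simp [lastVarEquiv, optionEquivLeft_X_none]

theorem lastVarEquiv_C (a : R) : lastVarEquiv R n (C a) = Polynomial.C (C a) := by
  simp [lastVarEquiv, optionEquivLeft_C]

theorem lastVarEquiv_rename_castSucc (g : MvPolynomial (Fin n) R) :
    lastVarEquiv R n (rename Fin.castSucc g) = Polynomial.C g := by
  have : ((lastVarEquiv R n).toAlgHom.comp (rename Fin.castSucc)) = Polynomial.CAlgHom := by
    ext j
    simp [lastVarEquiv_X_castSucc]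
  exact DFunLike.congr_fun this g

end LastVariable

section ReversedSum
variable {S : Type*} [Semiring S] (p : ℕ → Polynomial S) {M : ℕ}

theorem coeff_zero_sum_range_mul_X_pow :
    (∑ j ∈ Finset.range (M + 1), p j * Polynomial.X ^ (M - j)).coeff 0 = (p M).coeff 0 := by
  rw [Polynomial.finsetSum_coeff, Finset.sum_eq_single M]
  · rw [Nat.sub_self, pow_zero, mul_one]
  · intro j hj hjM
    rw [Polynomial.coeff_mul_X_pow', if_neg (by grind)]
  · simp

theorem coeff_one_sum_range_mul_X_pow (hM : 1 ≤ M) :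
    (∑ j ∈ Finset.range (M + 1), p j * Polynomial.X ^ (M - j)).coeff 1
      = (p M).coeff 1 + (p (M - 1)).coeff 0 := by
  rw [Polynomial.finsetSum_coeff, Finset.sum_eq_add M (M - 1) (by omega)]
  · rw [Polynomial.coeff_mul_X_pow', Polynomial.coeff_mul_X_pow', if_pos (by omega),
      if_pos (by omega), Nat.sub_self, Nat.sub_sub_self hM, Nat.sub_zero, Nat.sub_self]
  · intro j hj hjM
    rw [Polynomial.coeff_mul_X_pow', if_neg (by grind)]
  · simp
  · simp

end ReversedSum

section ReflectionInLastVariable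
variable {n : ℕ} (A : Matrix (Fin (n + 1)) (Fin (n + 1)) ℤ) (i : Fin n)

theorem weylRefl_castSucc_X_last : weylRefl A i.castSucc (X (Fin.last n)) = X (Fin.last n) := by
  rw [weylRefl_X, if_neg (Fin.castSucc_lt_last i).ne', sub_zero]

theorem lastVarEquiv_simpleRoot_castSucc :
    lastVarEquiv ℚ n (simpleRoot A i.castSucc)
      = Polynomial.C (simpleRoot (A.submatrix Fin.castSucc Fin.castSucc) i)
        + (A (Fin.last n) i.castSucc : ℚ) • Polynomial.X := by
  simp only [simpleRoot, Fin.sum_univ_castSucc, map_add, map_sum, map_smul,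
    lastVarEquiv_X_castSucc, lastVarEquiv_X_last, Polynomial.smul_C, Matrix.submatrix_apply]

theorem lastVarEquiv_weylRefl_X_castSucc (j : Fin n) :
    lastVarEquiv ℚ n (weylRefl A i.castSucc (X j.castSucc))
      = Polynomial.C (weylRefl (A.submatrix Fin.castSucc Fin.castSucc) i (X j))
        - Polynomial.C ((A (Fin.last n) i.castSucc : ℚ) • pderiv i (X j)) * Polynomial.X := by
  simp only [weylRefl_X, Fin.castSucc_inj, pderiv_X, Pi.single_apply]
  split_ifs with hji
  · subst hji
    rw [map_sub, lastVarEquiv_X_castSucc, lastVarEquiv_simpleRoot_castSucc, smul_eq_C_mul,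
      mul_one, map_sub, Algebra.smul_def, Polynomial.algebraMap_apply, algebraMap_eq]
    ring
  · simp [lastVarEquiv_X_castSucc]

theorem coeff_zero_lastVarEquiv_weylRefl_rename (g : MvPolynomial (Fin n) ℚ) :
    (lastVarEquiv ℚ n (weylRefl A i.castSucc (rename Fin.castSucc g))).coeff 0
      = weylRefl (A.submatrix Fin.castSucc Fin.castSucc) i g := by
  induction g using MvPolynomial.induction_on with
  | C a => simp [lastVarEquiv_C]
  | add p q hp hq => simp only [map_add, Polynomial.coeff_add, hp, hq]
  | mul_X p j hp =>
    simp [lastVarEquiv_weylRefl_X_castSucc, Polynomial.mul_coeff_zero, hp]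

theorem coeff_one_lastVarEquiv_weylRefl_rename (g : MvPolynomial (Fin n) ℚ) :
    (lastVarEquiv ℚ n (weylRefl A i.castSucc (rename Fin.castSucc g))).coeff 1
      = -((A (Fin.last n) i.castSucc : ℚ) •
          weylRefl (A.submatrix Fin.castSucc Fin.castSucc) i (pderiv i g)) := by
  induction g using MvPolynomial.induction_on with
  | C a => simp [lastVarEquiv_C]
  | add p q hp hq => simp only [map_add, Polynomial.coeff_add, hp, hq, smul_add, neg_add]
  | mul_X p j hp =>
    simp only [map_mul, rename_X, lastVarEquiv_weylRefl_X_castSucc, Polynomial.mul_coeff_one,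
      hp, coeff_zero_lastVarEquiv_weylRefl_rename, pderiv_mul, map_add]
    rcases eq_or_ne j i with rfl | hji
    · simp [smul_eq_C_mul]
      ring
    · simp [hji]

theorem top_components_of_weylRefl_castSucc_eq {M : ℕ} (hM : 1 ≤ M)
    (g : ℕ → MvPolynomial (Fin n) ℚ)
    (hf : weylRefl A i.castSucc
        (∑ j ∈ Finset.range (M + 1), rename Fin.castSucc (g j) * X (Fin.last n) ^ (M - j))
      = ∑ j ∈ Finset.range (M + 1), rename Fin.castSucc (g j) * X (Fin.last n) ^ (M - j)) :
    weylRefl (A.submatrix Fin.castSucc Fin.castSucc) i (g M) = g M ∧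
      weylRefl (A.submatrix Fin.castSucc Fin.castSucc) i (g (M - 1))
        - (A (Fin.last n) i.castSucc : ℚ) •
            weylRefl (A.submatrix Fin.castSucc Fin.castSucc) i (pderiv i (g M)) = g (M - 1) := by
  have hΦ := congrArg (lastVarEquiv ℚ n) hf
  simp only [map_sum, map_mul, map_pow, weylRefl_castSucc_X_last, lastVarEquiv_X_last,
    lastVarEquiv_rename_castSucc] at hΦ
  constructor
  · have h0 := congrArg (Polynomial.coeff · 0) hΦ
    simpa only [coeff_zero_sum_range_mul_X_pow, coeff_zero_lastVarEquiv_weylRefl_rename,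
      Polynomial.coeff_C_zero] using h0
  · have h1 := congrArg (Polynomial.coeff · 1) hΦ
    simp only [coeff_one_sum_range_mul_X_pow _ hM, coeff_one_lastVarEquiv_weylRefl_rename,
      coeff_zero_lastVarEquiv_weylRefl_rename, Polynomial.coeff_C_zero,
      Polynomial.coeff_C_of_ne_zero one_ne_zero, zero_add] at h1
    rwa [sub_eq_neg_add]

end ReflectionInLastVariable

section NextComponent
variable {ι : Type*} [Fintype ι] [DecidableEq ι] {A : Matrix ι ι ℤ} {i : ι}

theorem weylRefl_sub_smul_pow_mul_eq_self (hii : A i i = 2) {ψ ω g₀ g₁ : MvPolynomial ι ℚ}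
    {l c k : ℚ} {m : ℕ} (hψ : weylRefl A i ψ = ψ) (hdψ : pderiv i ψ = l • simpleRoot A i)
    (hω : weylRefl A i ω = ω - (l * c) • simpleRoot A i) (hg₀ : g₀ = k • ψ ^ m)
    (hg₁ : weylRefl A i g₁ - c • weylRefl A i (pderiv i g₀) = g₁) :
    weylRefl A i (g₁ - (k * m) • (ψ ^ (m - 1) * ω)) = g₁ - (k * m) • (ψ ^ (m - 1) * ω) := by
  have hσdg₀ : weylRefl A i (pderiv i g₀) = -((k * m * l) • (ψ ^ (m - 1) * simpleRoot A i)) := by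
    rw [hg₀, Derivation.map_smul, Derivation.leibniz_pow, hdψ, smul_eq_mul, map_smul,
      map_nsmul, map_mul, map_pow, map_smul, hψ, weylRefl_simpleRoot_self hii]
    simp only [smul_eq_C_mul, nsmul_eq_mul, C_mul, map_natCast]
    ring
  rw [map_sub, map_smul, map_mul, map_pow, hψ, hω, eq_add_of_sub_eq hg₁, hσdg₀]
  simp only [smul_eq_C_mul, C_mul]
  ring

end NextComponent

theorem top_two_components_general {n m : ℕ} (hm : 1 ≤ m)
    (A : Matrix (Fin (n + 1)) (Fin (n + 1)) ℤ) (hA : IsCartanMatrix A)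
    (lam : Fin n → Fin n → ℚ)
    (ψ' : MvPolynomial (Fin n) ℚ)
    (hψ'def : ψ' = ∑ i, ∑ j, lam i j • (X i * X j))
    (hψ'inv : WeylInvariant (A.submatrix Fin.castSucc Fin.castSucc) ψ')
    (hIA' : ∀ h : MvPolynomial (Fin n) ℚ,
      WeylInvariant (A.submatrix Fin.castSucc Fin.castSucc) h →
        ∃ p : Polynomial ℚ, h = Polynomial.aeval ψ' p)
    (f : MvPolynomial (Fin (n + 1)) ℚ)
    (hfinv : WeylInvariant A f)
    (g : ℕ → MvPolynomial (Fin n) ℚ) (hg : ∀ i, (g i).IsHomogeneous i)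
    (hdec : f = ∑ i ∈ Finset.range (2 * m + 1),
      rename Fin.castSucc (g i) * X (Fin.last n) ^ (2 * m - i)) :
    ∃ k : ℚ, g (2 * m) = k • ψ' ^ m ∧
      g (2 * m - 1) = (k * m) •
        (ψ' ^ (m - 1) *
          ∑ j : Fin n, (lam j j * (A (Fin.last n) j.castSucc : ℚ)) • X j) := by
  obtain rfl : ψ' = quadraticPoly lam := hψ'def
  subst hdec
  have hψ : (quadraticPoly lam).IsHomogeneous 2 := isHomogeneous_quadraticPoly lam
  have hA'ii (i : Fin n) : A.submatrix Fin.castSucc Fin.castSucc i i = 2 := hA.1 i.castSucc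
  have htop i := top_components_of_weylRefl_castSucc_eq A i (by omega) g (hfinv i.castSucc)
  obtain ⟨p, hp⟩ := hIA' _ fun i => (htop i).1
  have hg₀ := (hg (2 * m)).eq_coeff_smul_pow_of_eq_aeval hψ two_ne_zero hp
  refine ⟨p.coeff m, hg₀, ?_⟩
  set ω : MvPolynomial (Fin n) ℚ := ∑ j, (lam j j * (A (Fin.last n) j.castSucc : ℚ)) • X j
  set r := g (2 * m - 1) - (p.coeff m * m) • (quadraticPoly lam ^ (m - 1) * ω)
  have hinv : WeylInvariant (A.submatrix Fin.castSucc Fin.castSucc) r := fun i =>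
    weylRefl_sub_smul_pow_mul_eq_self (hA'ii i) (hψ'inv i)
      (pderiv_quadraticPoly_of_weylRefl_eq (hA'ii i) (hψ'inv i))
      (by rw [weylRefl_linear, mul_comm]) hg₀ (htop i).2
  have hodd : r.IsHomogeneous (2 * m - 1) := by
    have hω : ω.IsHomogeneous 1 := isHomogeneous_sum_smul_X _
    have h := ((hψ.pow (m - 1)).mul hω).C_mul (p.coeff m * m)
    rw [show 2 * (m - 1) + 1 = 2 * m - 1 by omega, ← smul_eq_C_mul] at h
    exact (hg _).sub h
  obtain ⟨q, hq⟩ := hIA' r hinv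
  exact sub_eq_zero.mp (hodd.eq_zero_of_eq_aeval hψ (by omega) hq)

/-- with `A` indefinite, `A'` indecomposable symmetrizable, `I(A') = ℚ[ψ']` for
`ψ' = ∑ λ_{ij} ω_i ω_j`, and `f = ∑ f_i ω_n^{l-i} ∈ I(A)` homogeneous of even degree `l = 2m`,
there is `k ∈ ℚ` with `f_l = k ψ'^m` and `f_{l-1} = k m ψ'^{m-1} ω_n^*`, where
`ω_n^* = ∑_{j ≤ n-1} λ_{jj} a_{nj} ω_j`. -/
theorem top_two_components {n m : ℕ} (hm : 1 ≤ m)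
    (A : Matrix (Fin (n + 1)) (Fin (n + 1)) ℤ) (hA : IsCartanMatrix A)
    (hidf : IndefiniteType A)
    (hind' : Indecomposable (A.submatrix Fin.castSucc Fin.castSucc))
    (hsym' : Symmetrizable (A.submatrix Fin.castSucc Fin.castSucc))
    (lam : Fin n → Fin n → ℚ) (hlam : ∀ i j, lam i j = lam j i)
    (ψ' : MvPolynomial (Fin n) ℚ)
    (hψ'def : ψ' = ∑ i, ∑ j, lam i j • (X i * X j)) (hψ'0 : ψ' ≠ 0)
    (hψ'inv : WeylInvariant (A.submatrix Fin.castSucc Fin.castSucc) ψ')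
    (hIA' : ∀ h : MvPolynomial (Fin n) ℚ,
      WeylInvariant (A.submatrix Fin.castSucc Fin.castSucc) h →
        ∃ p : Polynomial ℚ, h = Polynomial.aeval ψ' p)
    (f : MvPolynomial (Fin (n + 1)) ℚ) (hfh : f.IsHomogeneous (2 * m))
    (hfinv : WeylInvariant A f)
    (g : ℕ → MvPolynomial (Fin n) ℚ) (hg : ∀ i, (g i).IsHomogeneous i)
    (hdec : f = ∑ i ∈ Finset.range (2 * m + 1),
      rename Fin.castSucc (g i) * X (Fin.last n) ^ (2 * m - i)) :
    ∃ k : ℚ, g (2 * m) = k • ψ' ^ m ∧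
      g (2 * m - 1) = (k * m) •
        (ψ' ^ (m - 1) *
          ∑ j : Fin n, (lam j j * (A (Fin.last n) j.castSucc : ℚ)) • X j) :=
  top_two_components_general hm A hA lam ψ' hψ'def hψ'inv hIA' f hfinv g hg hdec
end

section
/- Let A be an n×n indecomposable Cartan matrix of indefinite type with upper-left (n−1)×(n−1) principal submatrix A'. If I(A') = ℚ (every W(A')-invariant polynomial in ℚ[ω_1,…,ω_{n−1}] is constant), then I(A) = ℚ (every W(A)-invariant polynomial in ℚ[ω_1,…,ω_n] is constant). -/
open MvPolynomial Matrix

/-!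
Substituting `ω_n = 0` intertwines `σ_i` with `σ'_i` for `i < n`, and these `σ_i` fix `ω_n`.
Hence if `f` is invariant under `σ_1, …, σ_{n-1}`, its image under `ω_n ↦ 0` is a constant `c`,
and `f - c = ω_n g` with `g` again invariant and of smaller degree: `f = p(ω_n)` for a
one-variable polynomial `p`. Indecomposability provides `j < n` with `a_{jn} ≠ 0`; specialising
`ω_j ↦ t` and every other `ω_k ↦ 0` turns `σ_n f = f` into `p(-a_{jn} t) = p(0)`, so `p` is
constant.
-/

section WeylReflection

variable {ι : Type*} [Fintype ι] [DecidableEq ι] (A : Matrix ι ι ℤ)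

theorem weylRefl_X_self (i : ι) : weylRefl A i (X i) = X i - simpleRoot A i := by
  simp [weylRefl]

theorem weylRefl_X_of_ne {i j : ι} (h : j ≠ i) : weylRefl A i (X j) = X j := by
  simp [weylRefl, h]

theorem weylRefl_C (i : ι) (c : ℚ) : weylRefl A i (C c) = C c :=
  algHom_C _ _

theorem aeval_single_simpleRoot (i j : ι) :
    aeval (Pi.single j (Polynomial.X : Polynomial ℚ)) (simpleRoot A i)
      = Polynomial.C (A j i : ℚ) * Polynomial.X := by
  simp [simpleRoot, Pi.single_apply, Polynomial.smul_eq_C_mul]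

end WeylReflection

section KillLast

variable {n : ℕ}

local notation "π" => killCompl (R := ℚ) (Fin.castSucc_injective n)

theorem killCompl_castSucc_X_last : π (X (Fin.last n)) = 0 := by
  simp [killCompl]

theorem killCompl_castSucc_X_castSucc (j : Fin n) : π (X j.castSucc) = X j := by
  rw [← rename_X, killCompl_rename_app]

theorem X_last_dvd_sub_rename_killCompl (q : MvPolynomial (Fin (n + 1)) ℚ) :
    X (Fin.last n) ∣ q - rename Fin.castSucc (π q) := by
  induction q using MvPolynomial.induction_on with
  | C a => simp
  | add p q hp hq =>
    rw [map_add, map_add, add_sub_add_comm]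
    exact dvd_add hp hq
  | mul_X p j hp =>
    induction j using Fin.lastCases with
    | last =>
      rw [map_mul, killCompl_castSucc_X_last, mul_zero, map_zero, sub_zero]
      exact dvd_mul_left _ _
    | cast j =>
      rw [map_mul, map_mul, killCompl_castSucc_X_castSucc, rename_X, ← sub_mul]
      exact hp.mul_right _

variable (A : Matrix (Fin (n + 1)) (Fin (n + 1)) ℤ)

theorem killCompl_simpleRoot_castSucc (i : Fin n) :
    π (simpleRoot A i.castSucc) = simpleRoot (A.submatrix Fin.castSucc Fin.castSucc) i := by
  simp [simpleRoot, Fin.sum_univ_castSucc, killCompl_castSucc_X_last,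
    killCompl_castSucc_X_castSucc]

theorem killCompl_weylRefl_castSucc (i : Fin n) (q : MvPolynomial (Fin (n + 1)) ℚ) :
    π (weylRefl A i.castSucc q) = weylRefl (A.submatrix Fin.castSucc Fin.castSucc) i (π q) := by
  suffices (π).comp (weylRefl A i.castSucc)
      = (weylRefl (A.submatrix Fin.castSucc Fin.castSucc) i).comp π from
    AlgHom.congr_fun this q
  refine algHom_ext fun j => ?_
  induction j using Fin.lastCases with
  | last =>
    simp [weylRefl_X_of_ne A (Fin.castSucc_ne_last i).symm, killCompl_castSucc_X_last]
  | cast j =>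
    obtain rfl | hji := eq_or_ne j i
    · simp [weylRefl_X_self, killCompl_castSucc_X_castSucc, killCompl_simpleRoot_castSucc]
    · simp [weylRefl_X_of_ne, hji, killCompl_castSucc_X_castSucc]

theorem exists_eq_aeval_X_last_of_forall_weylRefl_castSucc
    (hA' : ∀ h : MvPolynomial (Fin n) ℚ,
      WeylInvariant (A.submatrix Fin.castSucc Fin.castSucc) h → ∃ c : ℚ, h = C c)
    (f : MvPolynomial (Fin (n + 1)) ℚ) (hf : ∀ i : Fin n, weylRefl A i.castSucc f = f) :
    ∃ p : Polynomial ℚ, f = Polynomial.aeval (X (Fin.last n)) p := by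
  induction hd : f.totalDegree using Nat.strong_induction_on generalizing f with
  | _ d ih =>
  obtain ⟨c, hc⟩ := hA' (π f) fun i => by rw [← killCompl_weylRefl_castSucc, hf]
  obtain ⟨g, hg⟩ : X (Fin.last n) ∣ f - C c := by
    simpa [hc] using X_last_dvd_sub_rename_killCompl f
  obtain rfl | hg0 := eq_or_ne g 0
  · exact ⟨Polynomial.C c, by simpa [sub_eq_zero] using hg⟩
  have hg_inv (i : Fin n) : weylRefl A i.castSucc g = g := by
    have h : weylRefl A i.castSucc (X (Fin.last n) * g) = X (Fin.last n) * g := by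
      rw [← hg, map_sub, hf i, weylRefl_C]
    rw [map_mul, weylRefl_X_of_ne A (Fin.castSucc_ne_last i).symm] at h
    exact mul_left_cancel₀ (X_ne_zero _) h
  have hlt : g.totalDegree < d := calc
    g.totalDegree < (X (Fin.last n) * g).totalDegree := by
      rw [totalDegree_mul_of_isDomain (X_ne_zero _) hg0, totalDegree_X]
      omega
    _ = (f - C c).totalDegree := by rw [hg]
    _ ≤ d := hd ▸ totalDegree_sub_C_le f c
  obtain ⟨p, rfl⟩ := ih _ hlt g hg_inv rfl
  refine ⟨Polynomial.C c + Polynomial.X * p, ?_⟩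
  rw [sub_eq_iff_eq_add'.mp hg]
  simp

end KillLast

section Cartan

variable {ι : Type*} {A : Matrix ι ι ℤ}

theorem IsCartanMatrix.finiteType_of_unique [Fintype ι] [Unique ι] (hA : IsCartanMatrix A) :
    FiniteType A := by
  intro x hx
  have hx0 : x default ≠ 0 := fun h => hx (funext fun i => by rwa [Unique.eq_default i])
  simp only [dotProduct, mulVec, Fintype.sum_unique, map_apply, hA.1, Int.cast_ofNat]
  nlinarith [mul_self_pos.mpr hx0]

theorem IsCartanMatrix.exists_ne_apply_ne_zero [Nontrivial ι] (hA : IsCartanMatrix A)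
    (hind : Indecomposable A) (k : ι) : ∃ j, j ≠ k ∧ A j k ≠ 0 := by
  by_contra! h
  obtain ⟨j, hj⟩ := exists_ne k
  refine hind ⟨{k}, {k}ᶜ, Set.singleton_nonempty k, ⟨j, hj⟩, disjoint_compl_right,
    Set.union_compl_self _, fun i hi j hj => ?_⟩
  rw [Set.mem_singleton_iff.mp hi]
  exact hA.2.2 j k (h j hj)

theorem natDegree_eq_zero_of_weylRefl_aeval_X [Fintype ι] [DecidableEq ι] {j k : ι}
    (hjk : j ≠ k) (hAjk : A j k ≠ 0) {p : Polynomial ℚ}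
    (hp : weylRefl A k (Polynomial.aeval (X k) p) = Polynomial.aeval (X k) p) :
    p.natDegree = 0 := by
  have hk : aeval (Pi.single j (Polynomial.X : Polynomial ℚ)) (X k : MvPolynomial ι ℚ) = 0 := by
    simp [hjk.symm]
  have h := congrArg (aeval (R := ℚ) (Pi.single j (Polynomial.X : Polynomial ℚ))) hp
  simp only [← Polynomial.aeval_algHom_apply, weylRefl_X_self, map_sub, hk,
    aeval_single_simpleRoot] at h
  rw [zero_sub, ← neg_mul, ← Polynomial.C_neg, ← Polynomial.comp_eq_aeval,
    ← Polynomial.comp_eq_aeval, Polynomial.comp_zero] at h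
  have hdeg := congrArg Polynomial.natDegree h
  rwa [Polynomial.natDegree_comp, Polynomial.natDegree_C_mul_X _ (by simpa using hAjk), mul_one,
    Polynomial.natDegree_C] at hdeg

end Cartan

/-- if `A` is indecomposable of indefinite type and the invariants of the
upper-left principal submatrix `A'` are trivial, then the invariants of `A` are trivial. -/
theorem trivial_invariants_of_trivial_submatrix_invariants {n : ℕ}
    (A : Matrix (Fin (n + 1)) (Fin (n + 1)) ℤ) (hA : IsCartanMatrix A)
    (hind : Indecomposable A) (hidf : IndefiniteType A)
    (hIA' : ∀ h : MvPolynomial (Fin n) ℚ,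
      WeylInvariant (A.submatrix Fin.castSucc Fin.castSucc) h → ∃ c : ℚ, h = C c) :
    ∀ f : MvPolynomial (Fin (n + 1)) ℚ, WeylInvariant A f → ∃ c : ℚ, f = C c := by
  intro f hf
  have hn : n ≠ 0 := by
    rintro rfl
    exact hidf.1 (IsCartanMatrix.finiteType_of_unique (ι := Fin 1) hA)
  have : Nontrivial (Fin (n + 1)) := Fin.nontrivial_iff_two_le.mpr (by omega)
  obtain ⟨j, hj, hAj⟩ := hA.exists_ne_apply_ne_zero hind (Fin.last n)
  obtain ⟨p, rfl⟩ :=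
    exists_eq_aeval_X_last_of_forall_weylRefl_castSucc A hIA' f fun i => hf i.castSucc
  obtain ⟨c, rfl⟩ := Polynomial.natDegree_eq_zero.mp
    (natDegree_eq_zero_of_weylRefl_aeval_X hj hAj (hf (Fin.last n)))
  exact ⟨c, by rw [Polynomial.aeval_C, algebraMap_eq]⟩
end
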